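/- Define the six qubit states of the six-state QKD protocol: ρ_1 := (1/2)(1 + σz), ρ_2 := (1/2)(1 − σz), ρ_3 := (1/2)(1 + σx), ρ_4 := (1/2)(1 − σx), ρ_5 := (1/2)(1 + σy), ρ_6 := (1/2)(1 − σy), and for η ∈ [0,1] the noisy states ρ^η_a := η • ρ_a + (1−η) • (1/2) • 1. Then the set of states (ρ^η_a)_{a=1,...,6} on ℂ² is classical if and only if η ≤ 1/√3; i.e. the white-noise robustness of the six-state set equals 1/√3. -/

import Mathlib

open Matrix BigOperators
open scoped ComplexOrder

noncomputable section

def σx : Matrix (Fin 2) (Fin 2) ℂ := !![0, 1; 1, 0]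
def σy : Matrix (Fin 2) (Fin 2) ℂ := !![0, -Complex.I; Complex.I, 0]
def σz : Matrix (Fin 2) (Fin 2) ℂ := !![1, 0; 0, -1]

/-- The noncontextual preparation-assignment polytope of a set of states. -/
def statesPolytope {d : ℕ} {A : Type*} [Fintype A]
    (ρ : A → Matrix (Fin d) (Fin d) ℂ) : Set (A → ℝ) :=
  {q | (∀ a, 0 ≤ q a) ∧ (∑ a : A, q a = 1) ∧
    ∀ α : A → ℝ, (∑ a : A, α a • ρ a = 0) → (∑ a : A, α a * q a = 0)}

/-- A set of states is classical. -/
def IsClassicalStates {d : ℕ} {A : Type*} [Fintype A]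
    (ρ : A → Matrix (Fin d) (Fin d) ℂ) : Prop :=
  ∃ (n : ℕ) (σ : Fin n → Matrix (Fin d) (Fin d) ℂ) (q : Fin n → A → ℝ),
    (∀ l, (σ l).PosSemidef) ∧
    (∀ l, q l ∈ statesPolytope ρ) ∧
    (∀ a : A, ρ a = ∑ l, q l a • σ l)

/-- The six qubit states of the six-state QKD protocol. -/
def sixStates : Fin 6 → Matrix (Fin 2) (Fin 2) ℂ :=
  ![(2 : ℝ)⁻¹ • ((1 : Matrix (Fin 2) (Fin 2) ℂ) + σz),
    (2 : ℝ)⁻¹ • ((1 : Matrix (Fin 2) (Fin 2) ℂ) - σz),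
    (2 : ℝ)⁻¹ • ((1 : Matrix (Fin 2) (Fin 2) ℂ) + σx),
    (2 : ℝ)⁻¹ • ((1 : Matrix (Fin 2) (Fin 2) ℂ) - σx),
    (2 : ℝ)⁻¹ • ((1 : Matrix (Fin 2) (Fin 2) ℂ) + σy),
    (2 : ℝ)⁻¹ • ((1 : Matrix (Fin 2) (Fin 2) ℂ) - σy)]

/-!
A qubit operator `t • 1 + v • σ` is positive semidefinite iff `‖v‖ ≤ t`, and the Bloch vector
`(Re tr (σᵢ M))ᵢ` of a positive semidefinite `M` has norm at most `Re tr M`.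

In a classical model `ρ_a = ∑_λ q_λ(a) σ̃_λ` every `q_λ` lies in the polytope, and the
dependencies `ρ₁ + ρ₂ = ρ₃ + ρ₄ = ρ₅ + ρ₆` give `q_λ(2k) + q_λ(2k+1) = 1/3`; hence
`d_λ = ∑_a q_λ(a) n_a`, with `n_a` the Bloch directions of the six states, has norm at most
`1/√3`. Pairing with the `n_a`,
`6η = ∑_a ⟪n_a, bloch ρ_a⟫ = ∑_λ ⟪d_λ, bloch σ̃_λ⟫ ≤ (1/√3) ∑_λ tr σ̃_λ = 6/√3`.

Conversely, for `0 < η ≤ 1/√3` the eight operators `(3/8)(1 + η s • σ)`, `s ∈ {±1}³`, with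
weights `q_s(a) = (1 + ⟪s, n_a⟫)/6` form a classical model, because the cube vertices satisfy
`∑_s s = 0` and `∑_s ⟪s, x⟫ s = 8x`. At `η = 0` all six states coincide.
-/

open scoped InnerProductSpace

local notation "E³" => EuclideanSpace ℝ (Fin 3)

lemma norm_sq_eq_fin_three (v : E³) : ‖v‖ ^ 2 = v 0 ^ 2 + v 1 ^ 2 + v 2 ^ 2 := by
  simp [EuclideanSpace.norm_sq_eq, Fin.sum_univ_three]

lemma posSemidef_fin_two_of_normSq_le {a d : ℝ} {b : ℂ} (ha : 0 ≤ a) (hd : 0 ≤ d)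
    (hb : Complex.normSq b ≤ a * d) : (!![(a : ℂ), b; star b, d]).PosSemidef := by
  refine PosSemidef.of_dotProduct_mulVec_nonneg ?_ fun x => ?_
  · ext i j
    fin_cases i <;> fin_cases j <;> simp
  set p := (x 0).re
  set q := (x 0).im
  set r := (x 1).re
  set s := (x 1).im
  have hquad : star x ⬝ᵥ (!![(a : ℂ), b; star b, d] *ᵥ x) =
      ((a * (p * p + q * q) + d * (r * r + s * s)
        + 2 * (b.re * (p * r + q * s) - b.im * (p * s - q * r)) : ℝ) : ℂ) := by
    simp [Complex.ext_iff, dotProduct, mulVec, Fin.sum_univ_two, p, q, r, s]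
    constructor <;> ring
  rw [hquad, Complex.zero_le_real]
  rw [Complex.normSq_apply] at hb
  rcases ha.lt_or_eq with ha | rfl
  · refine nonneg_of_mul_nonneg_right ?_ ha
    -- `a • x*Mx = |a x₀ + b x₁|² + (a d - |b|²) |x₁|²`
    nlinarith [sq_nonneg (a * p + b.re * r - b.im * s), sq_nonneg (a * q + b.re * s + b.im * r),
      mul_nonneg (sub_nonneg.2 hb) (add_nonneg (sq_nonneg r) (sq_nonneg s))]
  · have hre : b.re = 0 := by nlinarith [sq_nonneg b.re, sq_nonneg b.im]
    have him : b.im = 0 := by nlinarith [sq_nonneg b.re, sq_nonneg b.im]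
    rw [hre, him]
    nlinarith [mul_nonneg hd (add_nonneg (sq_nonneg r) (sq_nonneg s))]

def pauli : Fin 3 → Matrix (Fin 2) (Fin 2) ℂ := ![σx, σy, σz]

def pauliExpansion (t : ℝ) (v : E³) : Matrix (Fin 2) (Fin 2) ℂ :=
  t • 1 + ∑ i, v i • pauli i

lemma pauliExpansion_eq (t : ℝ) (v : E³) :
    pauliExpansion t v =
      !![(t + v 2 : ℂ), v 0 - v 1 * Complex.I; v 0 + v 1 * Complex.I, t - v 2] := by
  ext i j
  fin_cases i <;> fin_cases j <;>
    simp [pauliExpansion, pauli, σx, σy, σz, Fin.sum_univ_three, Complex.real_smul] <;> ring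

lemma trace_pauliExpansion (t : ℝ) (v : E³) : (pauliExpansion t v).trace = 2 * t := by
  rw [pauliExpansion_eq, trace_fin_two_of]
  ring

lemma sum_smul_pauliExpansion {ι : Type*} (s : Finset ι) (c t : ι → ℝ) (v : ι → E³) :
    ∑ l ∈ s, c l • pauliExpansion (t l) (v l) =
      pauliExpansion (∑ l ∈ s, c l * t l) (∑ l ∈ s, c l • v l) := by
  simp only [pauliExpansion, smul_add, Finset.sum_add_distrib, Finset.smul_sum, smul_smul,
    Finset.sum_smul, WithLp.ofLp_sum, WithLp.ofLp_smul, Finset.sum_apply, Pi.smul_apply, smul_eq_mul]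
  rw [Finset.sum_comm]

lemma posSemidef_pauliExpansion {t : ℝ} {v : E³} (h : ‖v‖ ≤ t) :
    (pauliExpansion t v).PosSemidef := by
  have hv := norm_sq_eq_fin_three v
  have ht : v 2 ^ 2 ≤ t ^ 2 := by nlinarith [norm_nonneg v, sq_nonneg (v 0), sq_nonneg (v 1)]
  have h2 := abs_le_of_sq_le_sq' ht ((norm_nonneg v).trans h)
  have hb : Complex.normSq (v 0 - v 1 * Complex.I) = v 0 ^ 2 + v 1 ^ 2 := by
    simp [Complex.normSq_apply]
    ring
  convert posSemidef_fin_two_of_normSq_le (a := t + v 2) (d := t - v 2) (by linarith)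
    (by linarith) (hb.trans_le (by nlinarith [norm_nonneg v])) using 1
  rw [pauliExpansion_eq]
  ext i j
  fin_cases i <;> fin_cases j <;> simp

def blochVector : Matrix (Fin 2) (Fin 2) ℂ →ₗ[ℝ] E³ where
  toFun M := WithLp.toLp 2 fun i => (pauli i * M).trace.re
  map_add' M N := by ext i; simp [Matrix.mul_add]
  map_smul' c M := by ext i; simp

lemma blochVector_eq (M : Matrix (Fin 2) (Fin 2) ℂ) :
    blochVector M = !₂[(M 0 1 + M 1 0).re, (M 1 0 - M 0 1).im, (M 0 0 - M 1 1).re] := by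
  ext i
  fin_cases i <;>
    simp [blochVector, pauli, σx, σy, σz, trace_fin_two, vecMul, dotProduct] <;> ring

lemma blochVector_pauliExpansion (t : ℝ) (v : E³) :
    blochVector (pauliExpansion t v) = (2 : ℝ) • v := by
  ext i
  fin_cases i <;> simp [blochVector_eq, pauliExpansion_eq] <;> ring

lemma pauliExpansion_eq_zero_iff {t : ℝ} {v : E³} : pauliExpansion t v = 0 ↔ t = 0 ∧ v = 0 := by
  refine ⟨fun h => ⟨?_, ?_⟩, fun ⟨ht, hv⟩ => by simp [pauliExpansion, ht, hv]⟩
  · simpa [trace_pauliExpansion] using congrArg Matrix.trace h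
  · simpa [blochVector_pauliExpansion] using congrArg blochVector h

lemma Matrix.PosSemidef.norm_blochVector_le {M : Matrix (Fin 2) (Fin 2) ℂ} (hM : M.PosSemidef) :
    ‖blochVector M‖ ≤ M.trace.re := by
  have h10 : M 1 0 = star (M 0 1) := (hM.1.apply 1 0).symm
  obtain ⟨ha, ha'⟩ := Complex.nonneg_iff.1 (hM.diag_nonneg (i := 0))
  obtain ⟨hd, hd'⟩ := Complex.nonneg_iff.1 (hM.diag_nonneg (i := 1))
  have hdet : Complex.normSq (M 0 1) ≤ (M 0 0).re * (M 1 1).re := by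
    have := (Complex.nonneg_iff.1 hM.det_nonneg).1
    rw [det_fin_two, h10] at this
    simp [← ha', ← hd', Complex.normSq_apply] at this ⊢
    linarith
  have hnorm : ‖blochVector M‖ ^ 2 =
      4 * Complex.normSq (M 0 1) + ((M 0 0).re - (M 1 1).re) ^ 2 := by
    rw [norm_sq_eq_fin_three, blochVector_eq, h10]
    simp [Complex.normSq_apply]
    ring
  have htr : M.trace.re = (M 0 0).re + (M 1 1).re := by simp [trace_fin_two]
  refine (pow_le_pow_iff_left₀ (norm_nonneg _) (by linarith) two_ne_zero).1 ?_
  rw [hnorm, htr]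
  nlinarith

theorem IsClassicalStates.sum_inner_blochVector_le {A : Type*} [Fintype A]
    {ρ : A → Matrix (Fin 2) (Fin 2) ℂ} (hρ : IsClassicalStates ρ) (w : A → E³) {c : ℝ}
    (hw : ∀ q ∈ statesPolytope ρ, ‖∑ a, q a • w a‖ ≤ c) :
    ∑ a, ⟪w a, blochVector (ρ a)⟫_ℝ ≤ c * ∑ a, (ρ a).trace.re := by
  obtain ⟨n, σ, q, hσ, hq, hdecomp⟩ := hρ
  have hlocal (l : Fin n) : ⟪∑ a, q l a • w a, blochVector (σ l)⟫_ℝ ≤ c * (σ l).trace.re :=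
    (real_inner_le_norm _ _).trans <| mul_le_mul (hw _ (hq l)) (hσ l).norm_blochVector_le
      (norm_nonneg _) ((norm_nonneg _).trans (hw _ (hq l)))
  calc ∑ a, ⟪w a, blochVector (ρ a)⟫_ℝ
      = ∑ l, ⟪∑ a, q l a • w a, blochVector (σ l)⟫_ℝ := by
        simp only [hdecomp, map_sum, map_smul, inner_sum, sum_inner, real_inner_smul_left,
          real_inner_smul_right]
        exact Finset.sum_comm
    _ ≤ ∑ l, c * (σ l).trace.re := Finset.sum_le_sum fun l _ => hlocal l
    _ = c * ∑ a, (ρ a).trace.re := by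
        simp only [hdecomp, trace_sum, trace_smul, Complex.re_sum, Complex.smul_re, smul_eq_mul,
          ← Finset.mul_sum]
        rw [Finset.sum_comm]
        simp only [← Finset.sum_mul, (hq _).2.1, one_mul]

lemma isClassicalStates_const {d : ℕ} {A : Type*} [Fintype A] [Nonempty A]
    {τ : Matrix (Fin d) (Fin d) ℂ} (hτ : τ.PosSemidef) (hτ0 : τ ≠ 0) :
    IsClassicalStates fun _ : A => τ := by
  have hcard : (0 : ℝ) < Fintype.card A := by exact_mod_cast Fintype.card_pos
  refine ⟨1, fun _ => (Fintype.card A : ℝ) • τ, fun _ _ => (Fintype.card A : ℝ)⁻¹,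
    fun _ => hτ.smul hcard.le, fun _ => ⟨fun _ => by positivity, ?_, fun α hα => ?_⟩,
    fun _ => by simp [smul_smul, hcard.ne']⟩
  · simp [hcard.ne']
  · rw [← Finset.sum_smul, smul_eq_zero] at hα
    simp [← Finset.sum_mul, hα.resolve_right hτ0]

def sixBlochVectors : Fin 6 → E³ :=
  ![!₂[0, 0, 1], !₂[0, 0, -1], !₂[1, 0, 0], !₂[-1, 0, 0], !₂[0, 1, 0], !₂[0, -1, 0]]

lemma sum_sixBlochVectors : ∑ a, sixBlochVectors a = 0 := by
  ext i
  fin_cases i <;> simp [sixBlochVectors, Fin.sum_univ_six]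

lemma inner_self_sixBlochVectors (a : Fin 6) : ⟪sixBlochVectors a, sixBlochVectors a⟫_ℝ = 1 := by
  rw [real_inner_self_eq_norm_sq, norm_sq_eq_fin_three]
  fin_cases a <;> simp [sixBlochVectors]

def noisySixStates (η : ℝ) : Fin 6 → Matrix (Fin 2) (Fin 2) ℂ :=
  fun a => η • sixStates a + ((1 - η) * (2 : ℝ)⁻¹) • (1 : Matrix (Fin 2) (Fin 2) ℂ)

lemma noisySixStates_eq_pauliExpansion (η : ℝ) (a : Fin 6) :
    noisySixStates η a = pauliExpansion 2⁻¹ ((η / 2) • sixBlochVectors a) := by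
  rw [pauliExpansion_eq]
  ext i j
  fin_cases a <;> fin_cases i <;> fin_cases j <;>
    simp [noisySixStates, sixStates, sixBlochVectors, σx, σy, σz, one_apply] <;> ring

lemma trace_noisySixStates (η : ℝ) (a : Fin 6) : (noisySixStates η a).trace = 1 := by
  rw [noisySixStates_eq_pauliExpansion, trace_pauliExpansion]
  norm_num

lemma blochVector_noisySixStates (η : ℝ) (a : Fin 6) :
    blochVector (noisySixStates η a) = η • sixBlochVectors a := by
  rw [noisySixStates_eq_pauliExpansion, blochVector_pauliExpansion, smul_smul]
  ring_nf

lemma sum_smul_noisySixStates (η : ℝ) (α : Fin 6 → ℝ) :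
    ∑ a, α a • noisySixStates η a =
      pauliExpansion (∑ a, α a * 2⁻¹) ((η / 2) • ∑ a, α a • sixBlochVectors a) := by
  simp only [noisySixStates_eq_pauliExpansion, sum_smul_pauliExpansion, smul_comm _ (η / 2),
    Finset.smul_sum]

lemma norm_sum_smul_sixBlochVectors_le {η : ℝ} {q : Fin 6 → ℝ}
    (hq : q ∈ statesPolytope (noisySixStates η)) :
    ‖∑ a, q a • sixBlochVectors a‖ ≤ 1 / √3 := by
  obtain ⟨hpos, hsum, hdep⟩ := hq
  have dependency (α : Fin 6 → ℝ) (hα : ∑ a, α a = 0) (hαv : ∑ a, α a • sixBlochVectors a = 0) :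
      ∑ a, α a * q a = 0 :=
    hdep α (by rw [sum_smul_noisySixStates, ← Finset.sum_mul, hα, hαv]; simp [pauliExpansion])
  have hzx := dependency ![1, 1, -1, -1, 0, 0] (by simp [Fin.sum_univ_six])
    (by ext i; fin_cases i <;> simp [sixBlochVectors, Fin.sum_univ_six])
  have hzy := dependency ![1, 1, 0, 0, -1, -1] (by simp [Fin.sum_univ_six])
    (by ext i; fin_cases i <;> simp [sixBlochVectors, Fin.sum_univ_six])
  simp only [Fin.sum_univ_six, cons_val_zero, cons_val_one, cons_val, one_mul, neg_mul, zero_mul,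
    add_zero] at hzx hzy hsum
  have hnorm : ‖∑ a, q a • sixBlochVectors a‖ ^ 2 =
      (q 2 - q 3) ^ 2 + (q 4 - q 5) ^ 2 + (q 0 - q 1) ^ 2 := by
    rw [norm_sq_eq_fin_three]
    simp [Fin.sum_univ_six, sixBlochVectors]
    ring
  rw [one_div, ← Real.sqrt_inv, ← Real.sqrt_sq (norm_nonneg _), hnorm]
  refine Real.sqrt_le_sqrt ?_
  nlinarith [mul_nonneg (hpos 0) (hpos 1), mul_nonneg (hpos 2) (hpos 3),
    mul_nonneg (hpos 4) (hpos 5)]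

lemma le_one_div_sqrt_three_of_isClassicalStates {η : ℝ}
    (h : IsClassicalStates (noisySixStates η)) : η ≤ 1 / √3 := by
  have key := h.sum_inner_blochVector_le sixBlochVectors fun q hq =>
    norm_sum_smul_sixBlochVectors_le hq
  simp only [blochVector_noisySixStates, real_inner_smul_right, inner_self_sixBlochVectors,
    trace_noisySixStates, Complex.one_re, Finset.sum_const, Finset.card_univ, Fintype.card_fin,
    nsmul_eq_mul] at key
  linarith

def cubeVertices : Fin 8 → E³ :=
  ![!₂[1, 1, 1], !₂[1, 1, -1], !₂[1, -1, 1], !₂[1, -1, -1],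
    !₂[-1, 1, 1], !₂[-1, 1, -1], !₂[-1, -1, 1], !₂[-1, -1, -1]]

lemma sum_cubeVertices : ∑ l, cubeVertices l = 0 := by
  ext i
  fin_cases i <;> simp [cubeVertices, Fin.sum_univ_eight]

lemma sum_inner_smul_cubeVertices (x : E³) :
    ∑ l, ⟪cubeVertices l, x⟫_ℝ • cubeVertices l = (8 : ℝ) • x := by
  ext i
  fin_cases i <;>
    simp [cubeVertices, Fin.sum_univ_eight, PiLp.inner_apply, Fin.sum_univ_three] <;> ring

lemma norm_cubeVertices (l : Fin 8) : ‖cubeVertices l‖ = √3 := by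
  rw [EuclideanSpace.norm_eq]
  fin_cases l <;> norm_num [cubeVertices, Fin.sum_univ_succ]

lemma neg_one_le_inner_cubeVertices_sixBlochVectors (l : Fin 8) (a : Fin 6) :
    -1 ≤ ⟪cubeVertices l, sixBlochVectors a⟫_ℝ := by
  fin_cases l <;> fin_cases a <;>
    simp [cubeVertices, sixBlochVectors, PiLp.inner_apply, Fin.sum_univ_succ]

lemma mem_statesPolytope_noisySixStates {η : ℝ} (hη : η ≠ 0) {x : E³}
    (hx : ∀ a, -1 ≤ ⟪x, sixBlochVectors a⟫_ℝ) :
    (fun a => (1 + ⟪x, sixBlochVectors a⟫_ℝ) / 6) ∈ statesPolytope (noisySixStates η) := by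
  refine ⟨fun a => by linarith [hx a], ?_, fun α hα => ?_⟩
  · rw [← Finset.sum_div, Finset.sum_add_distrib, ← inner_sum, sum_sixBlochVectors]
    simp
  · rw [sum_smul_noisySixStates, pauliExpansion_eq_zero_iff, smul_eq_zero] at hα
    obtain ⟨hα1, hη2 | hαv⟩ := hα
    · exact absurd hη2 (div_ne_zero hη two_ne_zero)
    have h1 : ∑ a, α a = 0 := by simpa [← Finset.sum_mul] using hα1
    have h2 : ∑ a, α a * ⟪x, sixBlochVectors a⟫_ℝ = 0 := by
      simpa [inner_sum, real_inner_smul_right] using congrArg (⟪x, ·⟫_ℝ) hαv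
    simp only [mul_div_assoc', ← Finset.sum_div, mul_add, mul_one, Finset.sum_add_distrib, h1, h2]
    simp

lemma noisySixStates_eq_sum_cubeVertices (η : ℝ) (a : Fin 6) :
    noisySixStates η a = ∑ l, ((1 + ⟪cubeVertices l, sixBlochVectors a⟫_ℝ) / 6) •
      pauliExpansion (3 / 8) ((3 * η / 8) • cubeVertices l) := by
  have hweight : ∑ l, ⟪cubeVertices l, sixBlochVectors a⟫_ℝ = 0 := by
    rw [← sum_inner, sum_cubeVertices, inner_zero_left]
  rw [noisySixStates_eq_pauliExpansion, sum_smul_pauliExpansion]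
  congr 1
  · rw [← Finset.sum_mul, ← Finset.sum_div, Finset.sum_add_distrib, hweight]
    norm_num
  · symm
    calc ∑ l, ((1 + ⟪cubeVertices l, sixBlochVectors a⟫_ℝ) / 6) • (3 * η / 8) • cubeVertices l
        = (η / 16) • ∑ l, (1 + ⟪cubeVertices l, sixBlochVectors a⟫_ℝ) • cubeVertices l := by
          rw [Finset.smul_sum]
          congr 1 with l
          rw [smul_smul, smul_smul]
          ring_nf
      _ = (η / 2) • sixBlochVectors a := by
          simp only [add_smul, one_smul, Finset.sum_add_distrib, sum_cubeVertices,
            sum_inner_smul_cubeVertices, zero_add, smul_smul]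
          ring_nf

lemma isClassicalStates_noisySixStates_of_pos {η : ℝ} (hη : 0 < η) (hle : η ≤ 1 / √3) :
    IsClassicalStates (noisySixStates η) := by
  refine ⟨8, fun l => pauliExpansion (3 / 8) ((3 * η / 8) • cubeVertices l),
    fun l a => (1 + ⟪cubeVertices l, sixBlochVectors a⟫_ℝ) / 6, fun l => ?_,
    fun l => mem_statesPolytope_noisySixStates hη.ne'
      (neg_one_le_inner_cubeVertices_sixBlochVectors l),
    noisySixStates_eq_sum_cubeVertices η⟩
  refine posSemidef_pauliExpansion ?_
  rw [norm_smul, norm_cubeVertices, Real.norm_of_nonneg (by positivity)]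
  have h3 : η * √3 ≤ 1 := by rwa [le_div_iff₀ (by positivity)] at hle
  nlinarith

lemma isClassicalStates_noisySixStates_zero : IsClassicalStates (noisySixStates 0) := by
  have h : noisySixStates 0 = fun _ => (2⁻¹ : ℝ) • (1 : Matrix (Fin 2) (Fin 2) ℂ) := by
    ext1 a
    simp [noisySixStates]
  rw [h]
  exact isClassicalStates_const (PosSemidef.one.smul (by norm_num)) (by simp)

theorem six_states_white_noise_robustness (η : ℝ) (hη : η ∈ Set.Icc (0 : ℝ) 1) :
    IsClassicalStates
        (fun a : Fin 6 =>
          η • sixStates a + ((1 - η) * (2 : ℝ)⁻¹) • (1 : Matrix (Fin 2) (Fin 2) ℂ)) ↔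
      η ≤ 1 / Real.sqrt 3 := by
  refine ⟨le_one_div_sqrt_three_of_isClassicalStates, fun hle => ?_⟩
  rcases hη.1.eq_or_lt with rfl | hpos
  · exact isClassicalStates_noisySixStates_zero
  · exact isClassicalStates_noisySixStates_of_pos hpos hle
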